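/- arXiv:2501.11559 — 2 statements merged into one kernel-verified Lean document; each statement's English description precedes it below -/
import Mathlib

section
/- In the affine Weyl group $\breve{W}$ of type $A_n^{(1)}$, with $\omega: W \to \breve{W}$ the homomorphism from the affine Weyl group $W$ of type $A_{n-1}^{(1)}$ given by $\omega(s_i) = s_i$ ($1 \leq i \leq n-1$) and $\omega(s_0) = s_n s_0 s_n$, the image of the translation element satisfies $\omega(t_{\alpha_i^\vee}) = t_{\breve{\alpha}_i^\vee}$ for each $i \in \{1, \ldots, n-1\}$. -/
/- STATEMENT 15: With ω : W → W̆ the homomorphism from the affine Weyl group of type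
   A_{n-1}^{(1)} to that of type A_n^{(1)} given by ω(sᵢ) = sᵢ (1 ≤ i ≤ n-1),
   ω(s₀) = sₙ s₀ sₙ, the translation elements satisfy ω(t_{αᵢ∨}) = t_{ᾰᵢ∨} for
   i = 1, …, n-1.  (We write n = m + 1, m ≥ 2.)

   Translations are realized by words: t_{θ∨} = s₀ s_θ with
   s_θ = s₁⋯s_{k-1} s_k s_{k-1}⋯s₁ the reflection in the highest root of the finite part
   (rank k), t_{α₁∨} = w t_{θ∨} w⁻¹ with w = s₂s₃⋯s_k (since w(θ∨) = α₁∨), and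
   t_{α_{i+1}∨} = (sᵢ s_{i+1}) t_{αᵢ∨} (sᵢ s_{i+1})⁻¹. -/

def affA (k : ℕ) : CoxeterMatrix (Fin (k + 1)) where
  M := Matrix.of fun i j : Fin (k + 1) =>
    if i = j then 1
    else if ((i : ℕ) + 1) % (k + 1) = (j : ℕ) ∨ ((j : ℕ) + 1) % (k + 1) = (i : ℕ) then 3
    else 2
  isSymm := by unfold Matrix.IsSymm; ext i j; simp [Matrix.transpose_apply]; aesop
  diagonal := by simp
  off_diagonal := by aesop

/-- The simple reflection `s_j` (index taken mod `k+1`). -/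
def snat (k : ℕ) (j : ℕ) : (affA k).Group :=
  (affA k).simple ⟨j % (k + 1), Nat.mod_lt j (Nat.succ_pos k)⟩

/-- The ascending product `s_a s_{a+1} ⋯ s_b`. -/
def ascend (k a b : ℕ) : (affA k).Group :=
  (((List.range (b + 1 - a)).map fun r => snat k (a + r)).prod)

/-- The descending product `s_b s_{b-1} ⋯ s_a`. -/
def descend (k a b : ℕ) : (affA k).Group :=
  (((List.range (b + 1 - a)).map fun r => snat k (b - r)).prod)

/-- The reflection `s_θ = s₁⋯s_{k-1} s_k s_{k-1}⋯s₁` in the highest root of the finite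
part (rank `k`). -/
def sTheta (k : ℕ) : (affA k).Group :=
  ascend k 1 (k - 1) * snat k k * descend k 1 (k - 1)

/-- The translation `t_{θ∨} = s₀ s_θ`. -/
def tTheta (k : ℕ) : (affA k).Group := snat k 0 * sTheta k

/-- The translation `t_{αᵢ∨}` (1-based index `i`), via `t_{α₁∨} = w t_{θ∨} w⁻¹` with
`w = s₂⋯s_k`, and `t_{α_{i+1}∨} = (sᵢ s_{i+1}) t_{αᵢ∨} (sᵢ s_{i+1})⁻¹`. -/
def tCoroot (k : ℕ) : ℕ → (affA k).Group
  | 0 => 1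
  | 1 => ascend k 2 k * tTheta k * (ascend k 2 k)⁻¹
  | (i + 2) =>
      (snat k (i + 1) * snat k (i + 2)) * tCoroot k (i + 1) *
        (snat k (i + 1) * snat k (i + 2))⁻¹


/-!
Write `c = s_{m+1}` in the group of type `A_{m+1}^{(1)}`. The map `ω` fixes `s₁, …, s_m`,
and `c` commutes with `s₁, …, s_{m-1}` and braids with `s_m`; hence `c · ω(s_θ) · c = s_θ̆`,
and since `ω(s₀) = c s₀ c` this gives `ω(t_{θ∨}) = c t_{θ̆∨} c`. The conjugating word for
`i = 1` satisfies `w̆ = ω(w) c`, which settles `i = 1`, and the recursion producing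
`t_{α_{i+1}∨}` from `t_{αᵢ∨}` only involves generators fixed by `ω`.
-/

namespace CoxeterSystem

variable {B W : Type*} [Group W] {M : CoxeterMatrix B} (cs : CoxeterSystem M W)

theorem simple_commute_of_eq_two {i j : B} (h : M i j = 2) :
    Commute (cs.simple i) (cs.simple j) := by
  have braid := cs.wordProd_braidWord_eq i j
  rw [braidWord, braidWord, ← M.symmetric i j, h] at braid
  simpa [Commute, SemiconjBy, alternatingWord, wordProd] using braid

theorem simple_braid_of_eq_three {i j : B} (h : M i j = 3) :
    cs.simple i * cs.simple j * cs.simple i = cs.simple j * cs.simple i * cs.simple j := by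
  have braid := cs.wordProd_braidWord_eq i j
  rw [braidWord, braidWord, ← M.symmetric i j, h] at braid
  simpa [alternatingWord, wordProd, mul_assoc] using braid.symm

end CoxeterSystem

theorem snat_eq_simple {k j : ℕ} (h : j < k + 1) : snat k j = (affA k).simple ⟨j, h⟩ := by
  simp only [snat, Nat.mod_eq_of_lt h]

@[simp]
theorem snat_mul_self (k j : ℕ) : snat k j * snat k j = 1 :=
  (affA k).toCoxeterSystem.simple_mul_simple_self _

@[simp]
theorem snat_inv (k j : ℕ) : (snat k j)⁻¹ = snat k j :=
  (affA k).toCoxeterSystem.inv_simple _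

theorem snat_commute_of_add_one_lt {k a b : ℕ} (ha : 1 ≤ a) (hab : a + 1 < b) (hb : b ≤ k) :
    Commute (snat k a) (snat k b) := by
  rw [snat_eq_simple (by omega : a < k + 1), snat_eq_simple (by omega : b < k + 1)]
  apply (affA k).toCoxeterSystem.simple_commute_of_eq_two
  have hb' : (b + 1) % (k + 1) ≠ a := by
    rcases hb.lt_or_eq with hb | rfl
    · rw [Nat.mod_eq_of_lt (by omega)]; omega
    · rw [Nat.mod_self]; omega
  simp only [affA, Matrix.of_apply, Fin.mk.injEq, Nat.mod_eq_of_lt (by omega : a + 1 < k + 1)]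
  rw [if_neg (by omega), if_neg (by omega)]

theorem snat_braid {k a : ℕ} (ha : a + 1 ≤ k) :
    snat k a * snat k (a + 1) * snat k a = snat k (a + 1) * snat k a * snat k (a + 1) := by
  rw [snat_eq_simple (by omega : a < k + 1), snat_eq_simple (by omega : a + 1 < k + 1)]
  apply (affA k).toCoxeterSystem.simple_braid_of_eq_three
  simp [affA, Nat.mod_eq_of_lt (by omega : a + 1 < k + 1)]

theorem ascend_succ {k a b : ℕ} (h : a ≤ b + 1) :
    ascend k a (b + 1) = ascend k a b * snat k (b + 1) := by
  rw [ascend, ascend, show b + 1 + 1 - a = b + 1 - a + 1 by omega, List.range_succ,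
    List.map_append, List.prod_append]
  simp only [List.map_cons, List.map_nil, List.prod_cons, List.prod_nil, mul_one]
  congr 2
  omega

theorem descend_succ {k a b : ℕ} (h : a ≤ b + 1) :
    descend k a (b + 1) = snat k (b + 1) * descend k a b := by
  rw [descend, descend, show b + 1 + 1 - a = b + 1 - a + 1 by omega, List.range_succ_eq_map]
  simp [Function.comp_def, Nat.succ_sub_succ]

theorem commute_ascend {k a b : ℕ} {x : (affA k).Group}
    (h : ∀ j, a ≤ j → j ≤ b → Commute x (snat k j)) : Commute x (ascend k a b) := by
  refine Commute.list_prod_right _ _ fun y hy => ?_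
  obtain ⟨r, hr, rfl⟩ := List.mem_map.mp hy
  exact h _ (by omega) (by simp at hr; omega)

theorem commute_descend {k a b : ℕ} {x : (affA k).Group}
    (h : ∀ j, a ≤ j → j ≤ b → Commute x (snat k j)) : Commute x (descend k a b) := by
  refine Commute.list_prod_right _ _ fun y hy => ?_
  obtain ⟨r, hr, rfl⟩ := List.mem_map.mp hy
  simp only [List.mem_range] at hr
  exact h _ (by omega) (by omega)

theorem sTheta_succ (n : ℕ) :
    sTheta (n + 2) = snat (n + 2) (n + 2) *
      (ascend (n + 2) 1 n * snat (n + 2) (n + 1) * descend (n + 2) 1 n) * snat (n + 2) (n + 2) := by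
  set c := snat (n + 2) (n + 2)
  set s := snat (n + 2) (n + 1)
  set P := ascend (n + 2) 1 n
  set Q := descend (n + 2) 1 n
  have hc : ∀ j, 1 ≤ j → j ≤ n → Commute c (snat (n + 2) j) :=
    fun j h1 h2 => (snat_commute_of_add_one_lt h1 (by omega) le_rfl).symm
  have hP : c * P = P * c := (commute_ascend hc).eq
  have hQ : Q * c = c * Q := (commute_descend hc).eq.symm
  calc sTheta (n + 2) = P * (s * c * s) * Q := by
        rw [sTheta, show n + 2 - 1 = n + 1 from rfl, ascend_succ (by omega),
          descend_succ (by omega)]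
        simp only [mul_assoc]
        rfl
    _ = P * (c * s * c) * Q := by rw [snat_braid le_rfl]
    _ = c * P * s * (Q * c) := by rw [hP, hQ]; simp only [mul_assoc]
    _ = c * (P * s * Q) * c := by simp only [mul_assoc]

theorem tCoroot_succ (k : ℕ) {i : ℕ} (hi : 1 ≤ i) :
    tCoroot k (i + 1) =
      (snat k i * snat k (i + 1)) * tCoroot k i * (snat k i * snat k (i + 1))⁻¹ := by
  obtain ⟨j, rfl⟩ : ∃ j, i = j + 1 := ⟨i - 1, by omega⟩
  rfl

section Embedding

variable {m : ℕ} {ω : (affA m).Group →* (affA (m + 1)).Group}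

theorem map_snat_of_map_simple
    (hω : ∀ i : Fin (m + 1), i ≠ 0 →
      ω ((affA m).simple i) = (affA (m + 1)).simple (Fin.castSucc i))
    {j : ℕ} (h1 : 1 ≤ j) (h2 : j ≤ m) : ω (snat m j) = snat (m + 1) j := by
  rw [snat_eq_simple (by omega : j < m + 1), hω _ (by simp [Fin.ext_iff]; omega),
    snat_eq_simple (by omega : j < m + 2)]
  rfl

theorem map_snat_zero_of_map_simple_zero
    (hω0 : ω ((affA m).simple 0) =
      (affA (m + 1)).simple (Fin.last (m + 1)) * (affA (m + 1)).simple 0 *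
        (affA (m + 1)).simple (Fin.last (m + 1))) :
    ω (snat m 0) = snat (m + 1) (m + 1) * snat (m + 1) 0 * snat (m + 1) (m + 1) := by
  rw [snat_eq_simple (by omega : 0 < m + 1), snat_eq_simple (by omega : m + 1 < m + 2),
    snat_eq_simple (by omega : 0 < m + 2)]
  exact hω0

variable (hs : ∀ j, 1 ≤ j → j ≤ m → ω (snat m j) = snat (m + 1) j)

include hs

theorem map_ascend {a b : ℕ} (ha : 1 ≤ a) (hb : b ≤ m) :
    ω (ascend m a b) = ascend (m + 1) a b := by
  rw [ascend, ascend, map_list_prod, List.map_map]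
  refine congrArg List.prod (List.map_congr_left fun r hr => ?_)
  simp only [List.mem_range] at hr
  exact hs _ (by omega) (by omega)

theorem map_descend {a b : ℕ} (ha : 1 ≤ a) (hb : b ≤ m) :
    ω (descend m a b) = descend (m + 1) a b := by
  rw [descend, descend, map_list_prod, List.map_map]
  refine congrArg List.prod (List.map_congr_left fun r hr => ?_)
  simp only [List.mem_range] at hr
  exact hs _ (by omega) (by omega)

end Embedding

section EmbeddingSucc

variable {n : ℕ} {ω : (affA (n + 1)).Group →* (affA (n + 2)).Group}
  (hs : ∀ j, 1 ≤ j → j ≤ n + 1 → ω (snat (n + 1) j) = snat (n + 2) j)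

include hs

theorem map_sTheta :
    ω (sTheta (n + 1)) = ascend (n + 2) 1 n * snat (n + 2) (n + 1) * descend (n + 2) 1 n := by
  rw [sTheta, show n + 1 - 1 = n from rfl, map_mul, map_mul, map_ascend hs le_rfl (by omega),
    hs _ le_add_self le_rfl, map_descend hs le_rfl (by omega)]

variable (hs0 : ω (snat (n + 1) 0) = snat (n + 2) (n + 2) * snat (n + 2) 0 * snat (n + 2) (n + 2))

include hs0

theorem map_tTheta :
    ω (tTheta (n + 1)) = snat (n + 2) (n + 2) * tTheta (n + 2) * snat (n + 2) (n + 2) := by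
  rw [tTheta, map_mul, hs0, map_sTheta hs, tTheta, sTheta_succ]
  simp only [mul_assoc, snat_mul_self, mul_one]

theorem map_tCoroot_one : ω (tCoroot (n + 1) 1) = tCoroot (n + 2) 1 := by
  rw [tCoroot, tCoroot, map_mul, map_mul, map_inv, map_ascend hs (by omega) le_rfl,
    map_tTheta hs hs0, ascend_succ (b := n + 1) (by omega), mul_inv_rev, snat_inv]
  simp only [mul_assoc]

theorem map_tCoroot {i : ℕ} (hi : 1 ≤ i) (hin : i ≤ n + 1) :
    ω (tCoroot (n + 1) i) = tCoroot (n + 2) i := by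
  induction i, hi using Nat.le_induction with
  | base => exact map_tCoroot_one hs hs0
  | succ i hi ih =>
    rw [tCoroot_succ _ hi, tCoroot_succ _ hi, map_mul, map_mul, map_inv, map_mul,
      hs _ hi (by omega), hs _ (by omega) hin, ih (by omega)]

end EmbeddingSucc

theorem stmt15_general (m : ℕ)
    (ω : (affA m).Group →* (affA (m + 1)).Group)
    (hω : ∀ i : Fin (m + 1), i ≠ 0 →
      ω ((affA m).simple i) = (affA (m + 1)).simple (Fin.castSucc i))
    (hω0 : ω ((affA m).simple 0) =
      (affA (m + 1)).simple (Fin.last (m + 1)) * (affA (m + 1)).simple 0 *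
        (affA (m + 1)).simple (Fin.last (m + 1))) :
    ∀ i : ℕ, 1 ≤ i → i ≤ m → ω (tCoroot m i) = tCoroot (m + 1) i := by
  intro i hi him
  obtain ⟨n, rfl⟩ : ∃ n, m = n + 1 := ⟨m - 1, by omega⟩
  exact map_tCoroot (fun _ => map_snat_of_map_simple hω)
    (map_snat_zero_of_map_simple_zero hω0) hi him

theorem stmt15 (m : ℕ) (hm : 2 ≤ m)
    (ω : (affA m).Group →* (affA (m + 1)).Group)
    (hω : ∀ i : Fin (m + 1), i ≠ 0 →
      ω ((affA m).simple i) = (affA (m + 1)).simple (Fin.castSucc i))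
    (hω0 : ω ((affA m).simple 0) =
      (affA (m + 1)).simple (Fin.last (m + 1)) * (affA (m + 1)).simple 0 *
        (affA (m + 1)).simple (Fin.last (m + 1))) :
    ∀ i : ℕ, 1 ≤ i → i ≤ m → ω (tCoroot m i) = tCoroot (m + 1) i :=
  stmt15_general m ω hω hω0
end

section
/- For an element $\xi \in Q_0^\vee$ of the finite coroot lattice and a subset $J \subseteq I_0$, say $\xi$ is $J$-adjusted if $\langle\xi,\gamma\rangle \in \{0,-1\}$ for all positive roots $\gamma$ in the root subsystem $\Delta_J \cap \Delta_+$ spanned by $\{\alpha_j : j \in J\}$. Then for each $\xi \in Q_0^\vee$ there exists a unique $\varphi_J(\xi) \in \bigoplus_{j\in J}\mathbb{Z}\alpha_j^\vee$ such that $\xi + \varphi_J(\xi)$ is $J$-adjusted; in particular, $\xi$ is $J$-adjusted if and only if $\varphi_J(\xi) = 0$. -/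
/-- The vector in `ℤ^{n+1}` corresponding to the coroot-lattice element `∑ ξ_a α_a∨`
(type A_n, simple coroots `α_a∨ = e_a - e_{a+1}`). -/
def corootVec (n : ℕ) (ξ : Fin n → ℤ) : Fin (n + 1) → ℤ := fun i =>
  (if h : (i : ℕ) < n then ξ ⟨i, h⟩ else 0) -
    (if h : 0 < (i : ℕ) then ξ ⟨(i : ℕ) - 1, by omega⟩ else 0)

/-
Encode `ζ : Fin n → ℤ` by its height function `p ↦ ζ (p - 1)` on `1 ≤ p ≤ n` (zero elsewhere):
`corootVec n ζ` is its forward difference, and adding a `φ` supported on `J` changes the heights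
exactly at the positions `J + 1`. These positions form maximal runs `(s, k]` whose endpoint heights
at `s` and `k + 1` are fixed, and adjustedness says that on each run the differences are
nondecreasing and take at most two consecutive values. Their sum over the run is fixed, which
determines them: if one such sequence is smaller than another somewhere, it is smaller or equal
everywhere, so its sum is strictly smaller. One exists: for a rise `S` over `L` steps, take steps
`S / L` for the first `L - S % L` and `S / L + 1` for the rest. The runs are treated one at a time,
peeling off the last one.
-/

open Finset
open scoped fwdDiff

-- `F` is the set of positions where heights may change; for `G = corootHeight ζ` and
-- `F = succImage J` the condition on `(i, j)` is `⟨ζ, γ_{ij}⟩ ∈ {0, -1}` for `γ_{ij} ∈ Δ_J ∩ Δ_+`.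
def IsAdjusted (F : Finset ℕ) (G : ℕ → ℤ) : Prop :=
  ∀ i j, i < j → Ioc i j ⊆ F → Δ_[1] G i ≤ Δ_[1] G j ∧ Δ_[1] G j ≤ Δ_[1] G i + 1

namespace IsAdjusted

variable {F F' : Finset ℕ} {G G' : ℕ → ℤ}

theorem mono (h : IsAdjusted F G) (hF : F' ⊆ F) : IsAdjusted F' G :=
  fun i j hij hsub => h i j hij (hsub.trans hF)

theorem congr (h : IsAdjusted F G) {a b : ℕ} (hF : ∀ q ∈ F, a < q ∧ q < b)
    (hG : ∀ p, a ≤ p → p ≤ b → G p = G' p) : IsAdjusted F G' := by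
  intro i j hij hsub
  have hi := hF (i + 1) (hsub (mem_Ioc.2 ⟨by omega, by omega⟩))
  have hj := hF j (hsub (mem_Ioc.2 ⟨hij, le_rfl⟩))
  simp only [fwdDiff]
  rw [← hG i (by omega) (by omega), ← hG (i + 1) (by omega) (by omega),
    ← hG j (by omega) (by omega), ← hG (j + 1) (by omega) (by omega)]
  exact h i j hij hsub

end IsAdjusted

section Runs

variable {F : Finset ℕ} {G G' : ℕ → ℤ}

theorem isAdjusted_iff_of_gap {s k : ℕ} (hs : s ∉ F) (hrun : Ioc s k ⊆ F)
    (hF : ∀ q ∈ F, q ≤ k) :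
    IsAdjusted F G ↔ IsAdjusted (F.filter (· < s)) G ∧ IsAdjusted (Ioc s k) G := by
  refine ⟨fun h => ⟨h.mono (filter_subset _ _), h.mono hrun⟩,
    fun ⟨hleft, hright⟩ i j hij hsub => ?_⟩
  by_cases hsi : s ≤ i
  · refine hright i j hij fun q hq => ?_
    have := mem_Ioc.1 hq
    exact mem_Ioc.2 ⟨by omega, hF q (hsub hq)⟩
  · have hjs : j < s := by
      by_contra
      exact hs (hsub (mem_Ioc.2 ⟨by omega, by omega⟩))
    refine hleft i j hij fun q hq => mem_filter.2 ⟨hsub hq, ?_⟩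
    have := mem_Ioc.1 hq
    omega

theorem exists_le_notMem_Ioc_subset (h0 : 0 ∉ F) : ∀ k : ℕ, ∃ s ≤ k, s ∉ F ∧ Ioc s k ⊆ F
  | 0 => ⟨0, le_rfl, h0, by simp⟩
  | k + 1 => by
    by_cases hk : k + 1 ∈ F
    · obtain ⟨s, hsk, hs, hrun⟩ := exists_le_notMem_Ioc_subset h0 k
      refine ⟨s, by omega, hs, fun q hq => ?_⟩
      rcases (mem_Ioc.1 hq).2.eq_or_lt with rfl | hlt
      · exact hk
      · exact hrun (mem_Ioc.2 ⟨(mem_Ioc.1 hq).1, by omega⟩)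
    · exact ⟨k + 1, le_rfl, hk, by simp⟩

theorem fwdDiff_le_of_isAdjusted_Ioc {s e : ℕ} (hG : IsAdjusted (Ioc s e) G)
    (hG' : IsAdjusted (Ioc s e) G') (hs : G s = G' s) (he : G (e + 1) = G' (e + 1))
    {q : ℕ} (hsq : s ≤ q) (hqe : q ≤ e) : Δ_[1] G q ≤ Δ_[1] G' q := by
  by_contra! hlt
  have hle : ∀ p ∈ Ico s (e + 1), Δ_[1] G' p ≤ Δ_[1] G p := by
    intro p hp
    have hp := mem_Ico.1 hp
    rcases lt_trichotomy p q with hpq | rfl | hqp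
    · have := hG p q hpq (Ioc_subset_Ioc hp.1 hqe)
      have := hG' p q hpq (Ioc_subset_Ioc hp.1 hqe)
      omega
    · exact hlt.le
    · have := hG q p hqp (Ioc_subset_Ioc hsq (by omega))
      have := hG' q p hqp (Ioc_subset_Ioc hsq (by omega))
      omega
  have hsum := sum_lt_sum hle ⟨q, mem_Ico.2 ⟨hsq, by omega⟩, hlt⟩
  have hse : s ≤ e + 1 := by omega
  simp only [fwdDiff, sum_Ico_sub G hse, sum_Ico_sub G' hse] at hsum
  omega

theorem eqOn_of_isAdjusted_Ioc {s e : ℕ} (hG : IsAdjusted (Ioc s e) G)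
    (hG' : IsAdjusted (Ioc s e) G') (hs : G s = G' s) (he : G (e + 1) = G' (e + 1)) :
    Set.EqOn G G' (Set.Icc s (e + 1)) := by
  rintro p ⟨hsp, hpe⟩
  have hsum : ∑ q ∈ Ico s p, Δ_[1] G q = ∑ q ∈ Ico s p, Δ_[1] G' q :=
    sum_congr rfl fun q hq => le_antisymm
      (fwdDiff_le_of_isAdjusted_Ioc hG hG' hs he (mem_Ico.1 hq).1 (by grind))
      (fwdDiff_le_of_isAdjusted_Ioc hG' hG hs.symm he.symm (mem_Ico.1 hq).1 (by grind))
  simp only [fwdDiff, sum_Ico_sub G hsp, sum_Ico_sub G' hsp] at hsum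
  omega

def balancedPath (m t k : ℤ) : ℤ := k * m + max 0 (k - t)

theorem balancedPath_succ_sub (m t k : ℤ) :
    balancedPath m t (k + 1) - balancedPath m t k = m + if t ≤ k then 1 else 0 := by
  unfold balancedPath
  split_ifs <;> grind

theorem balancedPath_zero {m t : ℤ} (ht : 0 < t) : balancedPath m t 0 = 0 := by
  simp [balancedPath, ht.le]

theorem balancedPath_ediv_emod {S L : ℤ} (hL : 0 < L) :
    balancedPath (S / L) (L - S % L) L = S := by
  have := Int.emod_nonneg S hL.ne'
  rw [balancedPath, sub_sub_cancel, max_eq_right this, mul_comm, Int.ediv_mul_add_emod]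

theorem isAdjusted_balancedPath (A m t : ℤ) (s : ℕ) (F : Finset ℕ) :
    IsAdjusted F fun p : ℕ => A + balancedPath m t (p - s) := by
  have hΔ (p : ℕ) : Δ_[1] (fun p : ℕ => A + balancedPath m t (p - s)) p =
      m + if t ≤ (p : ℤ) - s then 1 else 0 := by
    rw [← balancedPath_succ_sub, fwdDiff]
    push_cast
    ring_nf
  intro i j hij _
  rw [hΔ, hΔ]
  split_ifs <;> omega

theorem exists_isAdjusted (G₀ : ℕ → ℤ) :
    ∀ (N : ℕ) {F : Finset ℕ}, 0 ∉ F → (∀ q ∈ F, q < N) →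
      ∃ G, (∀ p ∉ F, G p = G₀ p) ∧ IsAdjusted F G
  | 0, _, _, hN => ⟨G₀, fun _ _ => rfl, fun _ j hij hsub =>
      absurd (hN j (hsub (mem_Ioc.2 ⟨hij, le_rfl⟩))) (Nat.not_lt_zero j)⟩
  | k + 1, F, h0, hN => by
    obtain ⟨s, hsk, hs, hrun⟩ := exists_le_notMem_Ioc_subset h0 k
    obtain ⟨G', hG'₀, hG'⟩ := exists_isAdjusted G₀ k (F := F.filter (· < s))
      (fun h => h0 (mem_filter.1 h).1) fun q hq => by have := (mem_filter.1 hq).2; omega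
    let L : ℤ := k + 1 - s
    let S : ℤ := G' (k + 1) - G' s
    let P : ℕ → ℤ := fun p => G' s + balancedPath (S / L) (L - S % L) (p - s)
    let G : ℕ → ℤ := fun p => if s < p ∧ p ≤ k then P p else G' p
    have hL : 0 < L := by omega
    have hGP : ∀ p, s ≤ p → p ≤ k + 1 → P p = G p := by
      intro p hsp hpk
      rcases hsp.eq_or_lt with rfl | hsp
      · simp [P, G, balancedPath_zero (sub_pos.2 (Int.emod_lt_of_pos S hL))]
      rcases hpk.eq_or_lt with rfl | hpk
      · have : ((k + 1 : ℕ) : ℤ) - s = L := by push_cast; ring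
        simp only [P, G, this, balancedPath_ediv_emod hL, S]
        simp
      · simp [G, hsp, Nat.le_of_lt_succ hpk]
    refine ⟨G, fun p hp => ?_, ?_⟩
    · have : ¬ (s < p ∧ p ≤ k) := fun h => hp (hrun (mem_Ioc.2 h))
      simp only [G, if_neg this]
      exact hG'₀ p fun h => hp (mem_filter.1 h).1
    · rw [isAdjusted_iff_of_gap hs hrun fun q hq => Nat.le_of_lt_succ (hN q hq)]
      refine ⟨hG'.congr (a := 0) (b := s) (fun q hq => ?_) fun p _ hps => ?_,
        (isAdjusted_balancedPath _ _ _ s _).congr (a := s) (b := k + 1) (fun q hq => ?_) hGP⟩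
      · exact ⟨Nat.pos_of_ne_zero fun h => h0 (h ▸ (mem_filter.1 hq).1), (mem_filter.1 hq).2⟩
      · simp only [G]
        rw [if_neg (by omega)]
      · have := mem_Ioc.1 hq
        omega

theorem eq_of_isAdjusted :
    ∀ (N : ℕ) {F : Finset ℕ}, 0 ∉ F → (∀ q ∈ F, q < N) → ∀ {G G' : ℕ → ℤ},
      IsAdjusted F G → IsAdjusted F G' → (∀ p ∉ F, G p = G' p) → G = G'
  | 0, _, _, hN, _, _, _, _, hoff => funext fun p => hoff p fun hp => Nat.not_lt_zero p (hN p hp)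
  | k + 1, F, h0, hN, G, G', hG, hG', hoff => by
    obtain ⟨s, hsk, hs, hrun⟩ := exists_le_notMem_Ioc_subset h0 k
    have hFk : ∀ q ∈ F, q ≤ k := fun q hq => Nat.le_of_lt_succ (hN q hq)
    rw [isAdjusted_iff_of_gap hs hrun hFk] at hG hG'
    have hrunEq := eqOn_of_isAdjusted_Ioc hG.2 hG'.2 (hoff s hs)
      (hoff (k + 1) fun h => by have := hFk _ h; omega)
    refine eq_of_isAdjusted k (fun h => h0 (mem_filter.1 h).1)
      (fun q hq => by have := (mem_filter.1 hq).2; omega) hG.1 hG'.1 fun p hp => ?_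
    by_cases hpF : p ∈ F
    · have hsp : s ≤ p := by simpa [hpF] using hp
      exact hrunEq ⟨hsp, by have := hFk p hpF; omega⟩
    · exact hoff p hpF

theorem existsUnique_isAdjusted (h0 : 0 ∉ F) (G₀ : ℕ → ℤ) :
    ∃! G, (∀ p ∉ F, G p = G₀ p) ∧ IsAdjusted F G := by
  obtain ⟨N, hN⟩ : ∃ N, ∀ q ∈ F, q < N :=
    ⟨F.sup id + 1, fun q hq => Nat.lt_succ_of_le (le_sup (f := id) hq)⟩
  obtain ⟨G, hG₀, hG⟩ := exists_isAdjusted G₀ N h0 hN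
  exact ⟨G, ⟨hG₀, hG⟩, fun G' ⟨hG'₀, hG'⟩ =>
    eq_of_isAdjusted N h0 hN hG' hG fun p hp => (hG'₀ p hp).trans (hG₀ p hp).symm⟩

end Runs

section Height

variable {n : ℕ}

def corootHeight (ζ : Fin n → ℤ) (p : ℕ) : ℤ :=
  if h : 0 < p ∧ p ≤ n then ζ ⟨p - 1, by omega⟩ else 0

theorem corootHeight_succ (ζ : Fin n → ℤ) (a : Fin n) : corootHeight ζ (a + 1) = ζ a := by
  simp [corootHeight, Nat.succ_le_of_lt a.isLt]

theorem corootHeight_eq_zero (ζ : Fin n → ℤ) {p : ℕ} (hp : ¬ (0 < p ∧ p ≤ n)) :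
    corootHeight ζ p = 0 :=
  dif_neg hp

theorem corootHeight_add (ζ ζ' : Fin n → ℤ) :
    corootHeight (ζ + ζ') = corootHeight ζ + corootHeight ζ' := by
  funext p
  simp only [corootHeight, Pi.add_apply]
  split_ifs <;> simp

theorem corootHeight_injective : Function.Injective (corootHeight (n := n)) := fun ζ ζ' h =>
  funext fun a => by rw [← corootHeight_succ ζ a, h, corootHeight_succ]

theorem corootHeight_comp_succ {G : ℕ → ℤ} (hG : ∀ p, ¬ (0 < p ∧ p ≤ n) → G p = 0) :
    corootHeight (fun a : Fin n => G (a + 1)) = G := by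
  funext p
  unfold corootHeight
  split_ifs with hp
  · simp only
    congr
    omega
  · exact (hG p hp).symm

theorem corootVec_eq_fwdDiff_corootHeight (ζ : Fin n → ℤ) (i : Fin (n + 1)) :
    corootVec n ζ i = Δ_[1] (corootHeight ζ) i := by
  have hsucc : 0 < (i : ℕ) + 1 ∧ (i : ℕ) + 1 ≤ n ↔ (i : ℕ) < n := by omega
  have hself : 0 < (i : ℕ) ∧ (i : ℕ) ≤ n ↔ 0 < (i : ℕ) := by omega
  simp only [corootVec, fwdDiff, corootHeight, hsucc, hself, Nat.add_sub_cancel]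

variable (J : Finset (Fin n))

def succImage : Finset ℕ := J.image fun a : Fin n => (a : ℕ) + 1

theorem succ_mem_succImage {a : Fin n} : (a : ℕ) + 1 ∈ succImage J ↔ a ∈ J := by
  simp [succImage, Fin.val_inj]

theorem mem_succImage_iff {p : ℕ} (hp : 0 < p ∧ p ≤ n) :
    p ∈ succImage J ↔ (⟨p - 1, by omega⟩ : Fin n) ∈ J := by
  rw [← succ_mem_succImage]
  simp only [Nat.sub_add_cancel hp.1]

theorem pos_and_le_of_mem_succImage {p : ℕ} (hp : p ∈ succImage J) : 0 < p ∧ p ≤ n := by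
  obtain ⟨a, -, rfl⟩ := mem_image.1 hp
  omega

theorem corootHeight_eq_zero_off_succImage_iff (φ : Fin n → ℤ) :
    (∀ p ∉ succImage J, corootHeight φ p = 0) ↔ ∀ a ∉ J, φ a = 0 := by
  refine ⟨fun h a ha => ?_, fun h p hp => ?_⟩
  · rw [← corootHeight_succ φ a, h _ ((succ_mem_succImage J).not.2 ha)]
  · unfold corootHeight
    split_ifs with hbounds
    · exact h _ ((mem_succImage_iff J hbounds).not.1 hp)
    · rfl

theorem isAdjusted_corootHeight_iff (ζ : Fin n → ℤ) :
    IsAdjusted (succImage J) (corootHeight ζ) ↔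
      ∀ i j : Fin (n + 1), i < j → (∀ a : Fin n, (i : ℕ) ≤ a → (a : ℕ) < j → a ∈ J) →
        (corootVec n ζ i - corootVec n ζ j = 0 ∨ corootVec n ζ i - corootVec n ζ j = -1) := by
  simp only [corootVec_eq_fwdDiff_corootHeight]
  constructor
  · intro h i j hij hJ
    have := h i j hij fun p hp => by
      have hp := mem_Ioc.1 hp
      exact (mem_succImage_iff J (by omega)).2 (hJ _ (by simp; omega) (by simp; omega))
    omega
  · intro h i j hij hsub
    have hjn := (pos_and_le_of_mem_succImage J (hsub (mem_Ioc.2 ⟨hij, le_rfl⟩))).2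
    have := h ⟨i, by omega⟩ ⟨j, by omega⟩ (Fin.mk_lt_mk.2 hij) fun a hia haj =>
      (succ_mem_succImage J).1 (hsub (mem_Ioc.2 ⟨by simpa using hia, by simpa using haj⟩))
    simp only at this
    omega

theorem zero_notMem_succImage : 0 ∉ succImage J :=
  fun h => (pos_and_le_of_mem_succImage J h).1.false

theorem supported_and_adjusted_iff (ξ φ : Fin n → ℤ) :
    ((∀ a, a ∉ J → φ a = 0) ∧
      ∀ i j : Fin (n + 1), i < j → (∀ a : Fin n, (i : ℕ) ≤ a → (a : ℕ) < j → a ∈ J) →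
        (corootVec n (ξ + φ) i - corootVec n (ξ + φ) j = 0 ∨
          corootVec n (ξ + φ) i - corootVec n (ξ + φ) j = -1)) ↔
      (∀ p ∉ succImage J, corootHeight (ξ + φ) p = corootHeight ξ p) ∧
        IsAdjusted (succImage J) (corootHeight (ξ + φ)) := by
  simp only [← isAdjusted_corootHeight_iff, ← corootHeight_eq_zero_off_succImage_iff,
    corootHeight_add, Pi.add_apply, add_eq_left]

end Height

theorem stmt19 (n : ℕ) (J : Finset (Fin n)) (ξ : Fin n → ℤ) :
    ∃! φ : Fin n → ℤ,
      (∀ a, a ∉ J → φ a = 0) ∧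
      ∀ i j : Fin (n + 1), i < j →
        (∀ a : Fin n, (i : ℕ) ≤ (a : ℕ) → (a : ℕ) < (j : ℕ) → a ∈ J) →
        (corootVec n (ξ + φ) i - corootVec n (ξ + φ) j = 0 ∨
          corootVec n (ξ + φ) i - corootVec n (ξ + φ) j = -1) := by
  refine (existsUnique_congr (supported_and_adjusted_iff J ξ)).2 ?_
  obtain ⟨G, ⟨hGξ, hG⟩, hG_unique⟩ :=
    existsUnique_isAdjusted (zero_notMem_succImage J) (corootHeight ξ)
  have hG_height : corootHeight (ξ + ((fun a : Fin n => G (a + 1)) - ξ)) = G := by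
    rw [add_sub_cancel]
    exact corootHeight_comp_succ fun p hp =>
      (hGξ p fun h => hp (pos_and_le_of_mem_succImage J h)).trans (corootHeight_eq_zero ξ hp)
  refine ⟨(fun a : Fin n => G (a + 1)) - ξ, ?_, fun φ hφ => ?_⟩
  · simp only [hG_height]
    exact ⟨hGξ, hG⟩
  · exact add_left_cancel (corootHeight_injective ((hG_unique _ hφ).trans hG_height.symm))
end
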